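/- arXiv:1411.3486 — 3 statements merged into one kernel-verified Lean document; each statement's English description precedes it below -/
import Mathlib

section
/- For any integer m ≥ 2, the polynomial 2x(1+x)^{m-2} + 1 in ℤ[x] is irreducible over ℚ. -/
/-!
The reversal `x ^ (m - 1) p(1 / x) = x ^ (m - 1) + 2 (1 + x) ^ (m - 2)` of `p` is monic and
Eisenstein at `2`. Reversal is multiplicative on polynomials with nonzero constant term and
fixes the constants, so `p` is irreducible over `ℤ`, and hence over `ℚ` by Gauss's lemma
since its constant term is `1`.
-/

open Polynomial

namespace Polynomial

lemma isPrimitive_of_isUnit_coeff {R : Type*} [CommSemiring R] {p : R[X]} {n : ℕ}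
    (h : IsUnit (p.coeff n)) : p.IsPrimitive :=
  fun r hr => isUnit_of_dvd_unit ((C_dvd_iff_dvd_coeff r p).mp hr n) h

section Reverse

variable {R : Type*} [CommRing R]

lemma reverse_one : (1 : R[X]).reverse = 1 := by
  simpa using reverse_C (1 : R)

lemma reverse_X : (X : R[X]).reverse = 1 := by
  simpa [reverse_one] using reverse_X_mul (1 : R[X])

lemma reverse_one_add_X : (1 + X : R[X]).reverse = 1 + X := by
  nontriviality R
  rw [← C_1, reverse_C_add, reverse_X, natDegree_X, pow_one, C_1, one_mul, add_comm]

lemma reverse_eq_self_of_natDegree_eq_zero {p : R[X]} (h : p.natDegree = 0) :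
    p.reverse = p := by
  rw [eq_C_of_natDegree_eq_zero h, reverse_C]

variable [IsDomain R]

lemma reverse_one_add_X_pow (n : ℕ) : ((1 + X : R[X]) ^ n).reverse = (1 + X) ^ n := by
  induction n with
  | zero => exact reverse_one
  | succ n ih => rw [pow_succ, reverse_mul_of_domain, ih, reverse_one_add_X]

lemma reverse_C_mul_X_mul_one_add_X_pow_add_one {a : R} (ha : a ≠ 0) (n : ℕ) :
    (C a * X * (1 + X) ^ n + 1 : R[X]).reverse = X ^ (n + 1) + C a * (1 + X) ^ n := by
  have hdeg : (C a * X * (1 + X) ^ n : R[X]).natDegree = n + 1 := by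
    compute_degree! <;> simp [ha, add_comm]
  have hadd := reverse_add_C (C a * X * (1 + X) ^ n) 1
  rw [C_1] at hadd
  rw [hadd, hdeg, one_mul, mul_right_comm, reverse_mul_X, reverse_mul_of_domain, reverse_C,
    reverse_one_add_X_pow, add_comm]

lemma isUnit_of_isUnit_reverse {p : R[X]} (h0 : p.coeff 0 ≠ 0) (h : IsUnit p.reverse) :
    IsUnit p := by
  have hdeg : p.natDegree = 0 := by
    simpa [reverse_natDegree, natTrailingDegree_eq_zero.mpr (Or.inr h0)] using
      natDegree_eq_zero_of_isUnit h
  rwa [reverse_eq_self_of_natDegree_eq_zero hdeg] at h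

theorem irreducible_of_irreducible_reverse {p : R[X]} (h0 : p.coeff 0 ≠ 0) (h : Irreducible p.reverse) :
    Irreducible p where
  not_isUnit hu := h.not_isUnit <| by
    rwa [reverse_eq_self_of_natDegree_eq_zero (natDegree_eq_zero_of_isUnit hu)]
  isUnit_or_isUnit g k hgk := by
    have hg0 : g.coeff 0 ≠ 0 := fun hg => h0 (by simp [hgk, mul_coeff_zero, hg])
    have hk0 : k.coeff 0 ≠ 0 := fun hk => h0 (by simp [hgk, mul_coeff_zero, hk])
    rw [hgk, reverse_mul_of_domain] at h
    exact (h.isUnit_or_isUnit rfl).imp (isUnit_of_isUnit_reverse hg0)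
      (isUnit_of_isUnit_reverse hk0)

end Reverse

theorem irreducible_X_pow_add_C_mul_one_add_X_pow {R : Type*} [CommRing R] [IsDomain R]
    {p : R} (hp : Prime p) (n : ℕ) : Irreducible (X ^ (n + 1) + C p * (1 + X) ^ n) := by
  have hdeg : (C p * (1 + X) ^ n).degree < ↑(n + 1) := by
    compute_degree
    exact WithBot.coe_lt_coe.mpr n.lt_add_one
  have hmonic : (X ^ (n + 1) + C p * (1 + X) ^ n).Monic := monic_X_pow_add hdeg
  have hnatDeg : (X ^ (n + 1) + C p * (1 + X) ^ n).natDegree = n + 1 := by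
    rw [natDegree_add_eq_left_of_degree_lt (by rwa [degree_X_pow]), natDegree_X_pow]
  have hcoeff (i : ℕ) (hi : i < n + 1) :
      (X ^ (n + 1) + C p * (1 + X) ^ n).coeff i = p * ((1 + X) ^ n).coeff i := by
    rw [coeff_add, coeff_X_pow, if_neg hi.ne, coeff_C_mul, zero_add]
  have hP : (Ideal.span {p}).IsPrime := (Ideal.span_singleton_prime hp.ne_zero).mpr hp
  refine IsEisensteinAt.irreducible ?_ hP hmonic.isPrimitive (by omega)
  refine hmonic.isEisensteinAt_of_mem_of_notMem hP.ne_top (fun hi => ?_) ?_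
  · rw [hnatDeg] at hi
    rw [hcoeff _ hi]
    exact Ideal.mul_mem_right _ _ (Ideal.mem_span_singleton_self p)
  · rw [hcoeff 0 n.succ_pos, coeff_zero_eq_eval_zero, Ideal.span_singleton_pow,
      Ideal.mem_span_singleton]
    simp only [eval_pow, eval_add, eval_one, eval_X, add_zero, one_pow, mul_one, sq]
    exact fun h => hp.not_isUnit (isUnit_of_dvd_one
      ((mul_dvd_mul_iff_left hp.ne_zero).mp (by rwa [mul_one])))

end Polynomial

theorem stmt0_general (m : ℕ) :
    Irreducible ((C 2 * X * (1 + X) ^ (m - 2) + 1 : ℤ[X]).map (Int.castRingHom ℚ)) := by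
  have hcoeff_zero : (C 2 * X * (1 + X) ^ (m - 2) + 1 : ℤ[X]).coeff 0 = 1 := by simp
  refine (IsPrimitive.Int.irreducible_iff_irreducible_map_cast
    (isPrimitive_of_isUnit_coeff (hcoeff_zero ▸ isUnit_one))).mp ?_
  refine irreducible_of_irreducible_reverse (hcoeff_zero ▸ one_ne_zero) ?_
  rw [reverse_C_mul_X_mul_one_add_X_pow_add_one two_ne_zero]
  exact irreducible_X_pow_add_C_mul_one_add_X_pow Int.prime_two _

/-- For any integer m ≥ 2, the polynomial 2x(1+x)^{m-2} + 1 in ℤ[x] is irreducible over ℚ. -/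
theorem stmt0 (m : ℕ) (hm : 2 ≤ m) :
    Irreducible ((C 2 * X * (1 + X) ^ (m - 2) + 1 : ℤ[X]).map (Int.castRingHom ℚ)) :=
  stmt0_general m
end

section
/- Let m ≥ 3 be odd and let ξ = e^{2πi/m}. Then for every i with 1 ≤ i ≤ (m-1)/2, one has 2ξ^i(1+ξ^i)^{m-2} + 1 ≠ 0. -/
/-! `ξ ^ i * (1 + ξ ^ i) ^ (m - 2)` is an algebraic integer, being a polynomial with integer
coefficients in a root of unity; it therefore cannot equal the non-integral rational `-1/2`. -/

theorem IsIntegral.two_mul_add_one_ne_zero {K : Type*} [Field K] [CharZero K] {x : K}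
    (hx : IsIntegral ℤ x) : 2 * x + 1 ≠ 0 := by
  intro h
  obtain ⟨k, hk⟩ := hx.exists_int_iff_exists_rat.mp ⟨-1 / 2, by push_cast; linear_combination h / 2⟩
  have hk' : ((2 * k + 1 : ℤ) : K) = 0 := by push_cast; rwa [← hk]
  have : 2 * k + 1 = 0 := by exact_mod_cast hk'
  omega

theorem stmt1_general (m : ℕ) (hm : 3 ≤ m)
    (ξ : ℂ) (hξ : ξ = Complex.exp (2 * Real.pi * Complex.I / m))
    (i : ℕ) :
    2 * ξ ^ i * (1 + ξ ^ i) ^ (m - 2) + 1 ≠ 0 := by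
  have hξ_int : IsIntegral ℤ ξ :=
    hξ ▸ (Complex.isPrimitiveRoot_exp m (by omega)).isIntegral (by omega)
  have hprod_int : IsIntegral ℤ (ξ ^ i * (1 + ξ ^ i) ^ (m - 2)) :=
    (hξ_int.pow i).mul ((isIntegral_one.add (hξ_int.pow i)).pow (m - 2))
  simpa only [mul_assoc] using hprod_int.two_mul_add_one_ne_zero

/-- Let m ≥ 3 be odd and ξ = e^{2πi/m}. Then for 1 ≤ i ≤ (m-1)/2,
    2ξ^i(1+ξ^i)^{m-2} + 1 ≠ 0. -/
theorem stmt1 (m : ℕ) (hm : 3 ≤ m) (hodd : Odd m)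
    (ξ : ℂ) (hξ : ξ = Complex.exp (2 * Real.pi * Complex.I / m))
    (i : ℕ) (hi1 : 1 ≤ i) (hi2 : i ≤ (m - 1) / 2) :
    2 * ξ ^ i * (1 + ξ ^ i) ^ (m - 2) + 1 ≠ 0 :=
  stmt1_general m hm ξ hξ i
end

section
/- Let m ≥ 3 be odd, ξ = e^{2πi/m}, and 1 ≤ i ≤ (m-1)/2. Then 1+ξ^i ≠ 0, and the point (1/(1+ξ^i)^m, 1, ξ^i/(1+ξ^i)^2, ξ^i/(1+ξ^i)^2) ∈ (ℂ*)^4 does not lie on the hyperplane {p₁ + p₂ + p₃ + p₄ = 1}. -/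
/-!
Write `z = ξ ^ i`, an `m`-th root of unity. As `m` is odd, `z ≠ -1`. If the point lay on the
hyperplane, clearing denominators in `1 / (1 + z) ^ m + 2 z / (1 + z) ^ 2 = 0` would give
`-z (1 + z) ^ (m - 2) = 1 / 2`, exhibiting `1 / 2` as an algebraic integer.
-/

lemma one_add_ne_zero_of_pow_eq_one_of_odd {R : Type*} [CommRing R] [NeZero (2 : R)]
    {z : R} {m : ℕ} (hodd : Odd m) (hz : z ^ m = 1) : 1 + z ≠ 0 := by
  intro h
  rw [show z = -1 by linear_combination h, hodd.neg_one_pow] at hz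
  exact NeZero.ne (2 : R) (by linear_combination -hz)

lemma neg_mul_one_add_pow_eq_half {K : Type*} [Field K] [NeZero (2 : K)] {z : K}
    (hz : 1 + z ≠ 0) {k : ℕ} (h : 1 / (1 + z) ^ (k + 2) + 2 * z / (1 + z) ^ 2 = 0) :
    -z * (1 + z) ^ k = 1 / 2 := by
  have hcleared : (1 + z) ^ (k + 2) * (1 / (1 + z) ^ (k + 2) + 2 * z / (1 + z) ^ 2)
      = 1 + 2 * z * (1 + z) ^ k := by
    field_simp
    ring
  refine eq_div_of_mul_eq (NeZero.ne 2) ?_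
  linear_combination hcleared - (1 + z) ^ (k + 2) * h

lemma not_isIntegral_half (K : Type*) [Field K] [CharZero K] : ¬ IsIntegral ℤ (1 / 2 : K) := by
  intro h
  rw [← map_ofNat (algebraMap ℚ K) 2, ← map_one (algebraMap ℚ K), ← map_div₀,
    isIntegral_algebraMap_iff (algebraMap ℚ K).injective] at h
  obtain ⟨n, hn⟩ := IsIntegrallyClosed.isIntegral_iff.mp h
  have : (2 * n : ℚ) = 1 := by rw [← eq_intCast (algebraMap ℤ ℚ), hn]; norm_num
  have : 2 * n = 1 := by exact_mod_cast this
  omega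

theorem stmt2_general (m : ℕ) (hm : 3 ≤ m) (hodd : Odd m)
    (ξ : ℂ) (hξ : ξ = Complex.exp (2 * Real.pi * Complex.I / m))
    (i : ℕ) :
    1 + ξ ^ i ≠ 0 ∧
    (1 / (1 + ξ ^ i) ^ m ≠ 0 ∧ ξ ^ i / (1 + ξ ^ i) ^ 2 ≠ 0) ∧
    1 / (1 + ξ ^ i) ^ m + 1 + ξ ^ i / (1 + ξ ^ i) ^ 2 + ξ ^ i / (1 + ξ ^ i) ^ 2 ≠ 1 := by
  have hprim : IsPrimitiveRoot ξ m := hξ ▸ Complex.isPrimitiveRoot_exp m (by omega)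
  have hzm : (ξ ^ i) ^ m = 1 := by rw [pow_right_comm, hprim.pow_eq_one, one_pow]
  have hz1 : 1 + ξ ^ i ≠ 0 := one_add_ne_zero_of_pow_eq_one_of_odd hodd hzm
  have hz0 : ξ ^ i ≠ 0 := pow_ne_zero _ (hprim.ne_zero (by omega))
  refine ⟨hz1, ⟨by simp [hz1], div_ne_zero hz0 (pow_ne_zero 2 hz1)⟩, fun hS => ?_⟩
  obtain ⟨k, rfl⟩ : ∃ k, m = k + 2 := ⟨m - 2, by omega⟩
  apply not_isIntegral_half ℂ
  rw [← neg_mul_one_add_pow_eq_half hz1 (k := k) (by linear_combination hS)]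
  have hz_int : IsIntegral ℤ (ξ ^ i) := (hprim.isIntegral (by omega)).pow i
  exact hz_int.neg.mul ((isIntegral_one.add hz_int).pow k)

/-- Let m ≥ 3 be odd, ξ = e^{2πi/m}, 1 ≤ i ≤ (m-1)/2. Then 1+ξ^i ≠ 0, the point
    (1/(1+ξ^i)^m, 1, ξ^i/(1+ξ^i)^2, ξ^i/(1+ξ^i)^2) lies in (ℂ*)^4, and it does not lie on
    the hyperplane {p₁+p₂+p₃+p₄ = 1}. -/
theorem stmt2 (m : ℕ) (hm : 3 ≤ m) (hodd : Odd m)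
    (ξ : ℂ) (hξ : ξ = Complex.exp (2 * Real.pi * Complex.I / m))
    (i : ℕ) (hi1 : 1 ≤ i) (hi2 : i ≤ (m - 1) / 2) :
    1 + ξ ^ i ≠ 0 ∧
    (1 / (1 + ξ ^ i) ^ m ≠ 0 ∧ ξ ^ i / (1 + ξ ^ i) ^ 2 ≠ 0) ∧
    1 / (1 + ξ ^ i) ^ m + 1 + ξ ^ i / (1 + ξ ^ i) ^ 2 + ξ ^ i / (1 + ξ ^ i) ^ 2 ≠ 1 :=
  stmt2_general m hm hodd ξ hξ i
end
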